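/- arXiv:0711.3484 — 2 statements merged into one kernel-verified Lean document; each statement's English description precedes it below -/
import Mathlib

section
/- Let p be an odd prime and r ∈ ℤ/pℤ. Then the number of g ∈ GL₂(ℤ/pℤ) with tr(g) = r equals p²(p−1) if r = 0 in ℤ/pℤ, and equals p(p² − p − 1) if r ≠ 0 in ℤ/pℤ. -/
/-!
A matrix of trace `r` is `!![a, b; c, r - a]`, and it is singular exactly when
`b * c = a * (r - a)`. Over a field with `q` elements, `b * c = t` has `q - 1` solutions for
`t ≠ 0` and `2q - 1` for `t = 0`, while `a * (r - a) = 0` has one root if `r = 0` and two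
otherwise. Hence `q(q - 1) + q` resp. `q(q - 1) + 2q` of the `q³` matrices of trace `r` are
singular.
-/

open Matrix Finset

section CommRing
variable {R : Type*} [CommRing R]

def traceFiberParam (r : R) (x : R × R × R) : Matrix (Fin 2) (Fin 2) R :=
  !![x.1, x.2.1; x.2.2, r - x.1]

lemma trace_traceFiberParam (r : R) (x : R × R × R) : (traceFiberParam r x).trace = r := by
  simp [traceFiberParam, trace_fin_two]

lemma det_traceFiberParam (r : R) (x : R × R × R) :
    (traceFiberParam r x).det = x.1 * (r - x.1) - x.2.1 * x.2.2 :=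
  det_fin_two_of ..

lemma eq_traceFiberParam {A : Matrix (Fin 2) (Fin 2) R} {r : R} (h : A.trace = r) :
    A = traceFiberParam r (A 0 0, A 0 1, A 1 0) := by
  rw [← h, trace_fin_two, traceFiberParam, add_sub_cancel_left]
  exact eta_fin_two A

noncomputable def traceFiberEquiv (r : R) :
    {g : GL (Fin 2) R | trace (g : Matrix (Fin 2) (Fin 2) R) = r} ≃
      {x : R × R × R // IsUnit (traceFiberParam r x).det} where
  toFun g := ⟨(g.1 0 0, g.1 0 1, g.1 1 0), by
    rw [← eq_traceFiberParam g.2, ← isUnit_iff_isUnit_det]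
    exact g.1.isUnit⟩
  invFun x := ⟨((isUnit_iff_isUnit_det _).mpr x.2).unit, trace_traceFiberParam r x.1⟩
  left_inv g := Subtype.ext <| Units.ext (eq_traceFiberParam g.2).symm
  right_inv x := rfl

end CommRing

section Field
variable {K : Type*} [Field K] [Fintype K] [DecidableEq K]

local notation "q" => Fintype.card K

lemma card_filter_mul_left_eq (b t : K) :
    #{c | b * c = t} = if b = 0 then (if t = 0 then q else 0) else 1 := by
  split_ifs with hb ht
  · simp [hb, ht]
  · simp [hb, Ne.symm ht]
  · simp [← eq_inv_mul_iff_mul_eq₀ hb, filter_eq']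

lemma card_filter_mul_eq (t : K) :
    #{x : K × K | x.1 * x.2 = t} = q - 1 + if t = 0 then q else 0 := by
  have hfib : #{x : K × K | x.1 * x.2 = t} = ∑ b, #{c | b * c = t} := by
    rw [card_filter, Fintype.sum_prod_type]
    simp_rw [card_filter]
  rw [hfib, Fintype.sum_eq_add_sum_compl 0, card_filter_mul_left_eq, if_pos rfl, add_comm,
    sum_congr rfl fun b hb => by rw [card_filter_mul_left_eq, if_neg (by simpa using hb)]]
  simp [card_compl]

lemma card_filter_mul_sub_eq_zero (r : K) :
    #{a | a * (r - a) = 0} = if r = 0 then 1 else 2 := by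
  have : ({a | a * (r - a) = 0} : Finset K) = {0, r} := by
    ext a; simp [sub_eq_zero, eq_comm]
  rw [this]
  split_ifs with hr
  · simp [hr]
  · exact card_pair (Ne.symm hr)

lemma card_filter_det_traceFiberParam_eq_zero (r : K) :
    #{x : K × K × K | (traceFiberParam r x).det = 0} =
      q * (q - 1) + q * if r = 0 then 1 else 2 := by
  have hfib : #{x : K × K × K | (traceFiberParam r x).det = 0} =
      ∑ a, #{y : K × K | y.1 * y.2 = a * (r - a)} := by
    rw [card_filter, Fintype.sum_prod_type]
    simp_rw [card_filter, det_traceFiberParam, sub_eq_zero, eq_comm]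
  simp_rw [hfib, card_filter_mul_eq, sum_add_distrib, ← card_filter_mul_sub_eq_zero, sum_ite,
    sum_const_zero, sum_const, card_univ, smul_eq_mul]
  ring

theorem card_GL2_trace_eq (r : K) :
    (Nat.card {g : GL (Fin 2) K | trace (g : Matrix (Fin 2) (Fin 2) K) = r} : ℤ) =
      if r = 0 then (q : ℤ) ^ 2 * (q - 1) else q * ((q : ℤ) ^ 2 - q - 1) := by
  have hsplit := card_filter_add_card_filter_not (s := univ)
    (fun x : K × K × K => (traceFiberParam r x).det = 0)
  rw [card_filter_det_traceFiberParam_eq_zero, card_univ, Fintype.card_prod,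
    Fintype.card_prod] at hsplit
  rw [Nat.card_congr (traceFiberEquiv r), Nat.card_eq_fintype_card, Fintype.card_subtype]
  simp_rw [isUnit_iff_ne_zero]
  have hq : 1 ≤ q := Fintype.card_pos
  zify [hq] at hsplit
  split_ifs at hsplit ⊢ <;> linear_combination hsplit

end Field

theorem card_GL2_fixed_trace_general (p : ℕ) [Fact p.Prime] (r : ZMod p) :
    (Nat.card {g : GL (Fin 2) (ZMod p) |
        Matrix.trace (g : Matrix (Fin 2) (Fin 2) (ZMod p)) = r} : ℤ)
      = if r = 0 then (p : ℤ) ^ 2 * (p - 1) else p * ((p : ℤ) ^ 2 - p - 1) := by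
  simpa [ZMod.card] using card_GL2_trace_eq r

/-- For an odd prime `p` and `r ∈ ℤ/pℤ`, the number of `g ∈ GL₂(ℤ/pℤ)` with
`tr g = r` equals `p²(p-1)` if `r = 0` and `p(p²-p-1)` if `r ≠ 0`. -/
theorem card_GL2_fixed_trace (p : ℕ) [Fact p.Prime] (hp : p ≠ 2) (r : ZMod p) :
    (Nat.card {g : GL (Fin 2) (ZMod p) |
        Matrix.trace (g : Matrix (Fin 2) (Fin 2) (ZMod p)) = r} : ℤ)
      = if r = 0 then (p : ℤ) ^ 2 * (p - 1) else p * ((p : ℤ) ^ 2 - p - 1) :=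
  card_GL2_fixed_trace_general p r
end

section
/- Let p be an odd prime and s ∈ {1, −1}. Then twice the number of g ∈ GL₂(ℤ/pℤ) such that det(1 − g) ≠ 0 and (det(g)/p) = s equals p(p³ − 2p² − p + 3 + s). In particular, the number of such g with (det(g)/p) = 1 exceeds the number with (det(g)/p) = −1 by exactly p. -/
/-!
Write `g = !![a, b; c, d]` over the field with `q` elements and let `χ` be its quadratic character.
Since `χ` takes values in `{0, ±1}`, `2 * [χ z = s] = 𝟙 z + s χ z` for `s = ±1`, with `𝟙` the
trivial character; and `χ (det g) = s` already forces `g` to be invertible. So twice the count is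
`∑ 𝟙 (det g) + s ∑ χ (det g)` over all matrices `g` with `det (1 - g) ≠ 0`. For any multiplicative
character `φ` with `∑ φ = T` that sum is `q ((T - 1)² + (q - 1)² T)`: for fixed `a, d`, both
`det (1 - g) = (1 - a)(1 - d) - bc` and `det g = ad - bc` depend on `(b, c)` only through `bc`,
which takes each nonzero value `q - 1` times and the value `0` exactly `2q - 1` times.
Now `T = q - 1` for `𝟙` and `T = 0` for `χ`.
-/

open Finset Matrix

theorem Matrix.GeneralLinearGroup.natCard_setOf_coe {n R : Type*} [Fintype n] [DecidableEq n]
    [CommRing R] [Fintype R] (P : Matrix n n R → Prop) [DecidablePred P]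
    (hP : ∀ M, P M → IsUnit M.det) :
    Nat.card {g : GL n R | P g} = #{M | P M} := by
  rw [← Fintype.card_subtype, ← Nat.card_eq_fintype_card]
  exact Nat.card_congr
    { toFun g := ⟨g.1, g.2⟩
      invFun M := ⟨GeneralLinearGroup.mk'' M.1 (hP M.1 M.2), M.2⟩
      left_inv _ := Subtype.ext (Units.ext rfl)
      right_inv _ := rfl }

theorem Matrix.sum_univ_fin_two {α M : Type*} [Fintype α] [AddCommMonoid M]
    (f : Matrix (Fin 2) (Fin 2) α → M) :
    ∑ A, f A = ∑ a, ∑ b, ∑ c, ∑ d, f !![a, b; c, d] := by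
  let e : ((α × α) × α × α) ≃ Matrix (Fin 2) (Fin 2) α :=
    { toFun x := !![x.1.1, x.1.2; x.2.1, x.2.2]
      invFun A := ((A 0 0, A 0 1), (A 1 0, A 1 1))
      left_inv _ := rfl
      right_inv A := (eta_fin_two A).symm }
  simp only [← e.sum_comp, Fintype.sum_prod_type]
  rfl

theorem sum_sum_comp_mul {G₀ R : Type*} [GroupWithZero G₀] [Fintype G₀] [DecidableEq G₀] [Ring R]
    (f : G₀ → R) :
    ∑ b, ∑ c, f (b * c) = Fintype.card G₀ * f 0 + (Fintype.card G₀ - 1) * ∑ u, f u := by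
  have hfiber : ∀ b ∈ ({0}ᶜ : Finset G₀), ∑ c, f (b * c) = ∑ u, f u := fun b hb =>
    Equiv.sum_comp (Equiv.mulLeft₀ b (by simpa using hb)) f
  rw [Fintype.sum_eq_add_sum_compl 0, sum_congr rfl hfiber, sum_const, card_compl,
    card_singleton, nsmul_eq_mul, Nat.cast_sub Fintype.card_pos]
  simp

theorem sum_ite_sub_ne_zero {G M : Type*} [AddCommGroup G] [Fintype G] [DecidableEq G]
    [AddCommGroup M] (g : G → M) (x y : G) :
    ∑ u, (if y - u ≠ 0 then g (x - u) else 0) = ∑ u, g u - g (x - y) := by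
  have hne (u : G) : y - u ≠ 0 ↔ u ≠ y := sub_ne_zero.trans ne_comm
  simp_rw [hne, ← sum_filter, filter_ne', sum_erase_eq_sub (mem_univ y)]
  exact congrArg (· - g (x - y)) (Equiv.sum_comp (Equiv.subLeft x) g)

theorem MulChar.sum_ite_ne_one {M R : Type*} [CommMonoid M] [Fintype M] [DecidableEq M]
    [CommRing R] (χ : MulChar M R) :
    ∑ a, (if a ≠ 1 then χ a else 0) = ∑ a, χ a - 1 := by
  rw [← sum_filter, filter_ne', sum_erase_eq_sub (mem_univ 1), map_one]

section FiniteField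

variable {F R : Type*} [Field F] [Fintype F] [DecidableEq F] [CommRing R]

theorem sum_mulChar_det_of_det_one_sub_ne_zero (χ : MulChar F R) :
    ∑ M : Matrix (Fin 2) (Fin 2) F with (1 - M).det ≠ 0, χ M.det =
      Fintype.card F * ((∑ x, χ x - 1) ^ 2 + (Fintype.card F - 1) ^ 2 * ∑ x, χ x) := by
  set q : R := (Fintype.card F : R)
  set T := ∑ x, χ x
  have hdet (a b c d : F) : (1 - !![a, b; c, d]).det = (1 - a) * (1 - d) - b * c := by
    simp [det_fin_two, one_fin_two]
  have hinner (a d : F) : ∑ b, ∑ c, (if (1 - a) * (1 - d) - b * c ≠ 0 then χ (a * d - b * c) else 0)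
      = q * (if (1 - a) * (1 - d) ≠ 0 then χ (a * d) else 0) + (q - 1) * (T - χ (a + d - 1)) := by
    rw [sum_sum_comp_mul (fun u => if (1 - a) * (1 - d) - u ≠ 0 then χ (a * d - u) else 0),
      sum_ite_sub_ne_zero, sub_zero, sub_zero, show a * d - (1 - a) * (1 - d) = a + d - 1 by ring]
  have hsplit (a d : F) : (if (1 - a) * (1 - d) ≠ 0 then χ (a * d) else 0)
      = (if a ≠ 1 then χ a else 0) * (if d ≠ 1 then χ d else 0) := by
    simp only [ne_eq, mul_eq_zero, sub_eq_zero, eq_comm (a := (1 : F)), not_or, ite_and, map_mul]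
    split_ifs <;> simp
  have hshift (a : F) : ∑ d, χ (a + d - 1) = T := by
    calc ∑ d, χ (a + d - 1) = ∑ d, χ (a - 1 + d) := by simp only [add_sub_right_comm]
      _ = T := Equiv.sum_comp (Equiv.addLeft (a - 1)) χ
  calc _ = ∑ a, ∑ d, ∑ b, ∑ c,
        (if (1 - a) * (1 - d) - b * c ≠ 0 then χ (a * d - b * c) else 0) := by
        rw [sum_filter, sum_univ_fin_two]
        simp only [hdet, det_fin_two_of]
        exact sum_congr rfl fun a _ => (sum_congr rfl fun b _ => sum_comm).trans sum_comm
    _ = q * ∑ a, ∑ d, (if a ≠ 1 then χ a else 0) * (if d ≠ 1 then χ d else 0)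
        + (q - 1) * ∑ a, ∑ d, (T - χ (a + d - 1)) := by
        simp only [hinner, hsplit, sum_add_distrib, mul_sum]
    _ = _ := by
        simp only [← sum_mul_sum, MulChar.sum_ite_ne_one, sum_sub_distrib, hshift, sum_const,
          card_univ, nsmul_eq_mul]
        ring

theorem two_mul_ite_quadraticChar_eq {s : ℤ} (hs : s = 1 ∨ s = -1) (x : F) :
    2 * (if quadraticChar F x = s then 1 else 0 : ℤ) =
      (1 : MulChar F ℤ) x + s * quadraticChar F x := by
  rcases eq_or_ne x 0 with rfl | hx
  · rcases hs with rfl | rfl <;> simp [MulChar.map_zero]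
  · rw [MulChar.one_apply hx.isUnit]
    rcases quadraticChar_dichotomy hx with h | h <;> rcases hs with rfl | rfl <;> simp [h]

theorem two_mul_card_det_one_sub_ne_zero_quadraticChar_eq (hF : ringChar F ≠ 2) {s : ℤ}
    (hs : s = 1 ∨ s = -1) :
    2 * (#{M : Matrix (Fin 2) (Fin 2) F | (1 - M).det ≠ 0 ∧ quadraticChar F M.det = s} : ℤ) =
      Fintype.card F * ((Fintype.card F : ℤ) ^ 3 - 2 * (Fintype.card F : ℤ) ^ 2 - Fintype.card F
        + 3 + s) := by
  have hone : ∑ x, (1 : MulChar F ℤ) x = Fintype.card F - 1 := by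
    rw [MulChar.sum_one_eq_card_units, Fintype.card_units, Nat.cast_sub Fintype.card_pos,
      Nat.cast_one]
  rw [← filter_filter, card_filter, Nat.cast_sum, mul_sum]
  push_cast
  simp only [two_mul_ite_quadraticChar_eq hs, sum_add_distrib, ← mul_sum,
    sum_mulChar_det_of_det_one_sub_ne_zero, hone, quadraticChar_sum_zero hF]
  ring

theorem two_mul_card_GL2_det_one_sub_ne_zero_quadraticChar_eq (hF : ringChar F ≠ 2) {s : ℤ}
    (hs : s = 1 ∨ s = -1) :
    2 * (Nat.card {g : GL (Fin 2) F | (1 - (g : Matrix (Fin 2) (Fin 2) F)).det ≠ 0 ∧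
        quadraticChar F (g : Matrix (Fin 2) (Fin 2) F).det = s} : ℤ) =
      Fintype.card F * ((Fintype.card F : ℤ) ^ 3 - 2 * (Fintype.card F : ℤ) ^ 2 - Fintype.card F
        + 3 + s) := by
  rw [GeneralLinearGroup.natCard_setOf_coe
    (fun M : Matrix (Fin 2) (Fin 2) F => (1 - M).det ≠ 0 ∧ quadraticChar F M.det = s)
    fun M hM => (Ne.isUnit fun h => by rcases hs with rfl | rfl <;> simp [h] at hM)]
  exact two_mul_card_det_one_sub_ne_zero_quadraticChar_eq hF hs

end FiniteField

theorem legendreSym_val_eq_quadraticChar (p : ℕ) [Fact p.Prime] (x : ZMod p) :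
    legendreSym p x.val = quadraticChar (ZMod p) x := by
  rw [legendreSym, Int.cast_natCast, ZMod.natCast_zmod_val]

/-- For an odd prime `p` and `s ∈ {1,-1}`, twice the number of `g ∈ GL₂(ℤ/pℤ)`
with `det(1-g) ≠ 0` and Legendre symbol of `det g` equal to `s` is
`p(p³ - 2p² - p + 3 + s)`. In particular, the count with symbol `1` exceeds the
count with symbol `-1` by exactly `p`. -/
theorem card_GL2_one_sub_invertible_legendre (p : ℕ) [Fact p.Prime] (hp : p ≠ 2) :
    (∀ s : ℤ, s = 1 ∨ s = -1 →
      2 * (Nat.card {g : GL (Fin 2) (ZMod p) |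
          Matrix.det (1 - (g : Matrix (Fin 2) (Fin 2) (ZMod p))) ≠ 0 ∧
          legendreSym p ((Matrix.det (g : Matrix (Fin 2) (Fin 2) (ZMod p))).val : ℤ) = s} : ℤ)
        = p * ((p : ℤ) ^ 3 - 2 * (p : ℤ) ^ 2 - p + 3 + s))
    ∧
    (Nat.card {g : GL (Fin 2) (ZMod p) |
        Matrix.det (1 - (g : Matrix (Fin 2) (Fin 2) (ZMod p))) ≠ 0 ∧
        legendreSym p ((Matrix.det (g : Matrix (Fin 2) (Fin 2) (ZMod p))).val : ℤ) = 1} : ℤ)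
      - (Nat.card {g : GL (Fin 2) (ZMod p) |
        Matrix.det (1 - (g : Matrix (Fin 2) (Fin 2) (ZMod p))) ≠ 0 ∧
        legendreSym p ((Matrix.det (g : Matrix (Fin 2) (Fin 2) (ZMod p))).val : ℤ) = -1} : ℤ)
      = p := by
  have hchar : ringChar (ZMod p) ≠ 2 := by rwa [ZMod.ringChar_zmod_n]
  have hcount (s : ℤ) (hs : s = 1 ∨ s = -1) :=
    two_mul_card_GL2_det_one_sub_ne_zero_quadraticChar_eq hchar hs
  simp only [legendreSym_val_eq_quadraticChar, ZMod.card] at hcount ⊢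
  exact ⟨hcount, by linarith [hcount 1 (.inl rfl), hcount (-1) (.inr rfl)]⟩
end
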